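/- Let N = 7 and w = CN7 = (1, 1, 1). Then for every permutation σ of ZMod 7, the PBNN map f_{σ,w} does not have a globally stable binary periodic orbit of any period. -/
import Mathlib


/-- Sign function: `sg u = 1` if `u ≥ 0`, else `-1`. -/
def sg (u : ℤ) : ℤ := if 0 ≤ u then 1 else -1

/-- Hidden-layer map of the PBNN with weights `w = (w_a, w_b, w_c)`:
`h_w(x)_i = sg (w_a * x_{i-1} + w_b * x_i + w_c * x_{i+1})`. -/
def hmap (N : ℕ) (w : ℤ × ℤ × ℤ) (x : ZMod N → ℤ) : ZMod N → ℤ :=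
  fun i => sg (w.1 * x (i - 1) + w.2.1 * x i + w.2.2 * x (i + 1))

/-- PBNN map `f_{σ,w}(x)_i = h_w(x)_{σ(i)}`. -/
def pbnn (N : ℕ) (w : ℤ × ℤ × ℤ) (σ : Equiv.Perm (ZMod N)) (x : ZMod N → ℤ) :
    ZMod N → ℤ :=
  fun i => hmap N w x (σ i)

/-- `x` is a binary state vector, i.e. all entries lie in `B = {-1, 1}`. -/
def isB {N : ℕ} (x : ZMod N → ℤ) : Prop := ∀ i, x i = -1 ∨ x i = 1

/-- `z` has minimal period `p` under `f`. -/
def minPeriod {α : Type} (f : α → α) (z : α) (p : ℕ) : Prop :=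
  0 < p ∧ f^[p] z = z ∧ ∀ q : ℕ, 0 < q → f^[q] z = z → p ≤ q

/-- The all-`(-1)` endpoint `x_-`. -/
def xminus (N : ℕ) : ZMod N → ℤ := fun _ => -1

/-- The all-`(+1)` endpoint `x_+`. -/
def xplus (N : ℕ) : ZMod N → ℤ := fun _ => 1

/-- `f_{σ,w}` has a globally stable binary periodic orbit (GBPO) of period `p`:
there is a binary point `z` (other than the two endpoints) of minimal period `p`
such that every binary point other than the two endpoints eventually lands on
the orbit `{z, f z, ..., f^{p-1} z}`. -/
def hasGBPO (N : ℕ) (w : ℤ × ℤ × ℤ) (σ : Equiv.Perm (ZMod N)) (p : ℕ) : Prop :=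
  ∃ z : ZMod N → ℤ, isB z ∧ z ≠ xminus N ∧ z ≠ xplus N ∧
    minPeriod (pbnn N w σ) z p ∧
    ∀ x : ZMod N → ℤ, isB x → x ≠ xminus N → x ≠ xplus N →
      ∃ k : ℕ, ∃ j < p, (pbnn N w σ)^[k] x = (pbnn N w σ)^[j] z

/-- The cyclic shift `c : i ↦ i + 1` on `ZMod N`. -/
def cShift (N : ℕ) : Equiv.Perm (ZMod N) := Equiv.addRight 1

/-- Equivalence of permutation IDs under the conjugation action of the cyclic
group generated by `c`: `σ ~ τ` iff `τ = c^k ∘ σ ∘ c^{-k}` for some `k : ℤ`. -/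
def shiftSetoid (N : ℕ) : Setoid (Equiv.Perm (ZMod N)) where
  r σ τ := ∃ k : ℤ, cShift N ^ k * σ * (cShift N ^ k)⁻¹ = τ
  iseqv := by
    refine ⟨fun σ => ⟨0, by simp⟩, ?_, ?_⟩
    · rintro σ τ ⟨k, rfl⟩; exact ⟨-k, by group⟩
    · rintro σ τ ρ ⟨k, rfl⟩ ⟨l, rfl⟩; exact ⟨l + k, by group⟩

-- Auxiliary: the single-(+1) point and key computations.

private def x0 : ZMod 7 → ℤ := fun i => if i = 0 then 1 else -1

private lemma sg_x0 : ∀ j : ZMod 7,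
    sg (1 * x0 (j - 1) + 1 * x0 j + 1 * x0 (j + 1)) = -1 := by
  decide

private lemma f_x0 (σ : Equiv.Perm (ZMod 7)) :
    pbnn 7 (1, 1, 1) σ x0 = xminus 7 := by
  funext i
  exact sg_x0 (σ i)

private lemma f_xminus (σ : Equiv.Perm (ZMod 7)) :
    pbnn 7 (1, 1, 1) σ (xminus 7) = xminus 7 := by
  funext i
  show sg (1 * (-1) + 1 * (-1) + 1 * (-1)) = -1
  norm_num [sg]

/-- For `N = 7` and CN7 = (1,1,1): no PBNN map has a globally stable binary
periodic orbit of any period. -/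
theorem stmt15 :
    ∀ σ : Equiv.Perm (ZMod 7), ∀ p : ℕ, ¬ hasGBPO 7 (1, 1, 1) σ p := by
  intro σ p h
  obtain ⟨z, hzB, hzm, hzp, ⟨hp, hzper, _⟩, habs⟩ := h
  set f := pbnn 7 (1, 1, 1) σ with hf
  have hiterm : ∀ n, f^[n] (xminus 7) = xminus 7 :=
    fun n => Function.iterate_fixed (f_xminus σ) n
  have hmul : ∀ n, f^[p * n] z = z := by
    intro n
    induction n with
    | zero => simp
    | succ n ih => rw [Nat.mul_succ, Function.iterate_add_apply, hzper, ih]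
  have key : ∀ m, f^[m] z = xminus 7 → False := by
    intro m hm
    apply hzm
    have hle : m ≤ p * m + p := le_trans (Nat.le_mul_of_pos_left m hp) (Nat.le_add_right _ _)
    have : z = f^[p * m + p - m + m] z := by
      rw [Nat.sub_add_cancel hle, ← Nat.mul_succ, hmul]
    rw [this, Function.iterate_add_apply, hm, hiterm]
  obtain ⟨k, j, hj, hkj⟩ := habs x0 (by intro i; by_cases hi : i = 0 <;> simp [x0, hi])
    (by intro hc; have := congrFun hc 0; simp [x0, xminus] at this)
    (by intro hc; have := congrFun hc 1; simp [x0, xplus] at this; exact absurd this (by decide))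
  apply key (j + 1)
  have h1 : f^[k + 1] x0 = f^[j + 1] z := by
    rw [Function.iterate_succ_apply', Function.iterate_succ_apply', hkj]
  have h2 : f^[k + 1] x0 = xminus 7 := by
    rw [Function.iterate_succ_apply, show f x0 = xminus 7 from f_x0 σ, hiterm]
  rw [← h1, h2]
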